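/- arXiv:1510.03106 — 2 statements merged into one kernel-verified Lean document; each statement's English description precedes it below -/
import Mathlib

section
/- If D and E are nonempty Young diagrams with (D)_r = (E)_r, then D ≤ E or E ≤ D (they are comparable under containment). The same holds if (D)_c = (E)_c. -/
/-- `Dr` is obtained from `D` by shortening the first row to `max (r₂ D) 1`. -/
def IsShortRow (D Dr : YoungDiagram) : Prop :=
  Dr.rowLen 0 = max (D.rowLen 1) 1 ∧ ∀ i : ℕ, 0 < i → Dr.rowLen i = D.rowLen i

/-- `Dc` is obtained from `D` by shortening the first column to `max (c₂ D) 1`. -/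
def IsShortCol (D Dc : YoungDiagram) : Prop :=
  Dc.colLen 0 = max (D.colLen 1) 1 ∧ ∀ i : ℕ, 0 < i → Dc.colLen i = D.colLen i

/-! Two diagrams whose rows agree from the second one on differ only in their first row, so the
one with the longer first row contains the other. Shortening the first row forgets nothing else,
hence equal shortenings force comparability; columns follow by transposition. -/

namespace YoungDiagram

variable {μ ν : YoungDiagram}

theorem le_of_rowLen_le (h : ∀ i, μ.rowLen i ≤ ν.rowLen i) : μ ≤ ν := fun c hc => by
  rw [← Prod.mk.eta (p := c), mem_iff_lt_rowLen] at hc ⊢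
  exact hc.trans_le (h _)

theorem le_of_rowLen_eq_of_rowLen_zero_le (h : ∀ i, 0 < i → μ.rowLen i = ν.rowLen i)
    (h₀ : μ.rowLen 0 ≤ ν.rowLen 0) : μ ≤ ν :=
  le_of_rowLen_le fun i => i.eq_zero_or_pos.elim (· ▸ h₀) fun hi => (h i hi).le

theorem le_total_of_rowLen_eq (h : ∀ i, 0 < i → μ.rowLen i = ν.rowLen i) : μ ≤ ν ∨ ν ≤ μ :=
  (le_total (μ.rowLen 0) (ν.rowLen 0)).imp (le_of_rowLen_eq_of_rowLen_zero_le h)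
    (le_of_rowLen_eq_of_rowLen_zero_le fun i hi => (h i hi).symm)

theorem le_total_of_colLen_eq (h : ∀ j, 0 < j → μ.colLen j = ν.colLen j) : μ ≤ ν ∨ ν ≤ μ := by
  simpa only [transpose_le_iff] using
    le_total_of_rowLen_eq (μ := μ.transpose) (ν := ν.transpose) (by simpa only [rowLen_transpose])

end YoungDiagram

theorem youngDiagram_comparable_of_short_eq_general (D E Dr Er Dc Ec : YoungDiagram)
    (hDr : IsShortRow D Dr) (hEr : IsShortRow E Er)
    (hDc : IsShortCol D Dc) (hEc : IsShortCol E Ec) :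
    (Dr = Er → D ≤ E ∨ E ≤ D) ∧ (Dc = Ec → D ≤ E ∨ E ≤ D) := by
  refine ⟨fun h => YoungDiagram.le_total_of_rowLen_eq fun i hi => ?_,
    fun h => YoungDiagram.le_total_of_colLen_eq fun j hj => ?_⟩
  · rw [← hDr.2 i hi, h, hEr.2 i hi]
  · rw [← hDc.2 j hj, h, hEc.2 j hj]

/-- If `(D)_r = (E)_r` or `(D)_c = (E)_c` then `D` and `E` are comparable. -/
theorem youngDiagram_comparable_of_short_eq (D E Dr Er Dc Ec : YoungDiagram)
    (hD : D ≠ ⊥) (hE : E ≠ ⊥)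
    (hDr : IsShortRow D Dr) (hEr : IsShortRow E Er)
    (hDc : IsShortCol D Dc) (hEc : IsShortCol E Ec) :
    (Dr = Er → D ≤ E ∨ E ≤ D) ∧ (Dc = Ec → D ≤ E ∨ E ≤ D) :=
  youngDiagram_comparable_of_short_eq_general D E Dr Er Dc Ec hDr hEr hDc hEc
end

section
/- For every n ≥ 1, the collection D_n of nonempty finite downward-closed subsets of ℕ^n (with the coordinatewise partial order on ℕ^n), ordered by inclusion, is a well partial ordering. -/
/-!
Enumerate each finite set `A i` as a list. By Higman's lemma, applied to the well quasi-order
`ℕⁿ` (Dickson), some list `i` embeds pointwise-below into a later list `j`, so every point of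
`A i` lies below a point of `A j`; as `A j` is downward closed, `A i ⊆ A j`.
-/

theorem List.SublistForall₂.exists_of_mem {α β : Type*} {R : α → β → Prop} {l₁ : List α}
    {l₂ : List β} (h : List.SublistForall₂ R l₁ l₂) {a : α} (ha : a ∈ l₁) : ∃ b ∈ l₂, R a b := by
  induction h with
  | nil => simp at ha
  | @cons a' b _ _ hab _ ih =>
    rcases List.mem_cons.mp ha with rfl | ha
    · exact ⟨b, List.mem_cons_self, hab⟩
    · obtain ⟨c, hc, hac⟩ := ih ha
      exact ⟨c, List.mem_cons_of_mem _ hc, hac⟩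
  | cons_right _ ih =>
    obtain ⟨c, hc, hac⟩ := ih ha
    exact ⟨c, List.mem_cons_of_mem _ hc, hac⟩

theorem exists_lt_forall_exists_le_of_finite {α : Type*} [Preorder α] [WellQuasiOrderedLE α]
    (s : ℕ → Set α) (hs : ∀ i, (s i).Finite) :
    ∃ i j, i < j ∧ ∀ x ∈ s i, ∃ y ∈ s j, x ≤ y := by
  have higman :=
    (Set.univ : Set α).isPWO_of_wellQuasiOrderedLE.partiallyWellOrderedOn_sublistForall₂ (· ≤ ·)
  obtain ⟨i, j, hij, hsub⟩ :=
    higman.exists_lt (f := fun i => (hs i).toFinset.toList) fun _ x _ => Set.mem_univ x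
  refine ⟨i, j, hij, fun x hx => ?_⟩
  obtain ⟨y, hy, hxy⟩ := hsub.exists_of_mem (by simpa using hx)
  exact ⟨y, by simpa using hy, hxy⟩

theorem wpo_finite_lowerSets_general (n : ℕ) (A : ℕ → Set (Fin n → ℕ))
    (hfin : ∀ i, (A i).Finite)
    (hlow : ∀ i, IsLowerSet (A i)) :
    ∃ i j : ℕ, i < j ∧ A i ⊆ A j := by
  obtain ⟨i, j, hij, hdom⟩ := exists_lt_forall_exists_le_of_finite A hfin
  refine ⟨i, j, hij, fun x hx => ?_⟩
  obtain ⟨y, hy, hxy⟩ := hdom x hx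
  exact hlow j hxy hy

/-- For every `n ≥ 1`, the nonempty finite downward-closed subsets of `ℕ^n`
(with the coordinatewise order), ordered by inclusion, form a well partial ordering. -/
theorem wpo_finite_lowerSets (n : ℕ) (hn : 0 < n) (A : ℕ → Set (Fin n → ℕ))
    (hfin : ∀ i, (A i).Finite) (hne : ∀ i, (A i).Nonempty)
    (hlow : ∀ i, IsLowerSet (A i)) :
    ∃ i j : ℕ, i < j ∧ A i ⊆ A j :=
  wpo_finite_lowerSets_general n A hfin hlow
end
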